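/- arXiv:2210.08469 — 3 statements merged into one kernel-verified Lean document; each statement's English description precedes it below -/
import Mathlib

section
/- Let m be a positive integer, λ = (2m-1)/m², and define f : ℝ_{>0}² → ℝ by f(r₁,r₂) = r₁ + r₂ - λ m r₁ if r₁/r₂ ≤ (m+1)/m and f(r₁,r₂) = r₁ + r₂ - λ(m+1) r₂ if r₁/r₂ ≥ (m+1)/m. Then the infimum of f(p₁,p₂) over all positive integers p₁, p₂ equals 1/m. -/
/-!
On the region `m r₁ ≤ (m + 1) r₂` the function equals `(m r₂ - (m - 1) r₁) / m`, and the
constraint forces the integer `m p₂ - (m - 1) p₁` to be positive, hence at least `1`. On the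
complementary region it equals `(m (m r₁ - (m + 1) r₂) + r₂) / m²`, and the integer
`m p₁ - (m + 1) p₂` is again at least `1`. So `1 / m` is a lower bound, attained at `(m + 1, m)`.
-/

/-- The log discrepancy of the monomial valuation with weights `(r₁, r₂)` with respect to the
pair `(𝔸², λ · (x ^ m + y ^ (m + 1) = 0))`, `λ = (2m - 1) / m²`. -/
noncomputable def logDiscrepancy (m : ℕ) (r₁ r₂ : ℝ) : ℝ :=
  if r₁ / r₂ ≤ (m + 1) / m then r₁ + r₂ - (2 * m - 1) / m ^ 2 * m * r₁
  else r₁ + r₂ - (2 * m - 1) / m ^ 2 * (m + 1) * r₂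

namespace logDiscrepancy

variable {m : ℕ}

theorem eq_of_le (hm : 0 < m) {r₁ r₂ : ℝ} (h : r₁ / r₂ ≤ (m + 1) / m) :
    logDiscrepancy m r₁ r₂ = (m * r₂ - (m - 1) * r₁) / m := by
  have : (m : ℝ) ≠ 0 := by positivity
  rw [logDiscrepancy, if_pos h]
  field_simp
  ring

theorem eq_of_not_le (hm : 0 < m) {r₁ r₂ : ℝ} (h : ¬ r₁ / r₂ ≤ (m + 1) / m) :
    logDiscrepancy m r₁ r₂ = (m * (m * r₁ - (m + 1) * r₂) + r₂) / m ^ 2 := by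
  have : (m : ℝ) ≠ 0 := by positivity
  rw [logDiscrepancy, if_neg h]
  field_simp
  ring

theorem succ_self (hm : 0 < m) : logDiscrepancy m (m + 1) m = 1 / m := by
  have : (m : ℝ) ≠ 0 := by positivity
  rw [eq_of_le hm (le_refl _)]
  field_simp
  ring

theorem inv_le_natCast (hm : 0 < m) {p₁ p₂ : ℕ} (hp₂ : 0 < p₂) :
    1 / (m : ℝ) ≤ logDiscrepancy m p₁ p₂ := by
  have hm' : (0 : ℝ) < m := by exact_mod_cast hm
  have hp₂' : (0 : ℝ) < p₂ := by exact_mod_cast hp₂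
  by_cases h : (p₁ : ℝ) / p₂ ≤ (m + 1) / m
  · rw [eq_of_le hm h]
    have hle : (m : ℝ) * p₁ ≤ (m + 1) * p₂ := by
      rw [div_le_div_iff₀ hp₂' hm'] at h
      linarith
    -- `m (m p₂ - (m - 1) p₁) ≥ m² p₂ - (m - 1)(m + 1) p₂ = p₂ > 0`, and the factor is an integer.
    have hpos : (0 : ℝ) < m * p₂ - (m - 1) * p₁ := by
      have hm1 : (0 : ℝ) ≤ m - 1 := by
        have : (1 : ℝ) ≤ m := by exact_mod_cast hm
        linarith
      have : (p₂ : ℝ) ≤ m * (m * p₂ - (m - 1) * p₁) := by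
        nlinarith [mul_le_mul_of_nonneg_left hle hm1]
      exact pos_of_mul_pos_right (hp₂'.trans_le this) hm'.le
    have hone : (1 : ℝ) ≤ m * p₂ - (m - 1) * p₁ := by
      have : (0 : ℤ) < m * p₂ - (m - 1) * p₁ := by exact_mod_cast hpos
      exact_mod_cast (show (1 : ℤ) ≤ m * p₂ - (m - 1) * p₁ by omega)
    gcongr
  · rw [eq_of_not_le hm h, le_div_iff₀ (by positivity)]
    have hlt : ((m : ℝ) + 1) * p₂ < m * p₁ := by
      rw [not_le, div_lt_div_iff₀ hm' hp₂'] at h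
      linarith
    have hone : (1 : ℝ) ≤ m * p₁ - (m + 1) * p₂ := by
      have : ((m : ℤ) + 1) * p₂ < m * p₁ := by exact_mod_cast hlt
      exact_mod_cast (show (1 : ℤ) ≤ m * p₁ - (m + 1) * p₂ by omega)
    have : (m : ℝ) ≤ m * (m * p₁ - (m + 1) * p₂) := by nlinarith
    field_simp
    nlinarith

end logDiscrepancy

theorem stmt_6 (m : ℕ) (hm : 0 < m) :
    sInf {x : ℝ | ∃ p₁ p₂ : ℕ, 0 < p₁ ∧ 0 < p₂ ∧
      x = (if (p₁ : ℝ) / p₂ ≤ (m + 1) / m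
        then (p₁ : ℝ) + p₂ - (2 * m - 1) / m ^ 2 * m * p₁
        else (p₁ : ℝ) + p₂ - (2 * m - 1) / m ^ 2 * (m + 1) * p₂)} = 1 / m := by
  change sInf {x : ℝ | ∃ p₁ p₂ : ℕ, 0 < p₁ ∧ 0 < p₂ ∧ x = logDiscrepancy m p₁ p₂} = 1 / m
  refine IsLeast.csInf_eq ⟨⟨m + 1, m, m.succ_pos, hm, ?_⟩, ?_⟩
  · push_cast
    exact (logDiscrepancy.succ_self hm).symm
  · rintro x ⟨p₁, p₂, -, hp₂, rfl⟩
    exact logDiscrepancy.inv_le_natCast hm hp₂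
end

section
/- Let ε ∈ (0,1], let a, α, β be real numbers with 0 ≤ a ≤ 1 - ε, α > 0 and 1 ≤ β ≤ 2. Define f(r₁, r₂) = r₁ + r₂ - α r₁ - a r₁ if r₁/r₂ ≤ β/α, and f(r₁, r₂) = r₁ + r₂ - β r₂ - a r₁ if r₁/r₂ ≥ β/α (with r₁/0 = +∞). Suppose f(e₁, e₂) ≥ ε for all e₁ ∈ ℕ₊ and e₂ ∈ ℤ_{≥0}. Then for every integer n ≥ 2, 1 + α/β - α - a ≥ (ε - 1/n)/(n - 1). -/
/-- On the (irrelevant) boundary `r₁/r₂ = β/α` the two branches agree; the convention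
`r₁/0 = +∞` means the second branch is used when `e₂ = 0`. -/
theorem stmt_11 (ε a α β : ℝ) (hε0 : 0 < ε) (hε1 : ε ≤ 1)
    (ha0 : 0 ≤ a) (ha1 : a ≤ 1 - ε) (hα : 0 < α) (hβ1 : 1 ≤ β) (hβ2 : β ≤ 2)
    (hf : ∀ e₁ e₂ : ℕ, 0 < e₁ →
      ε ≤ (if 0 < e₂ ∧ (e₁ : ℝ) / e₂ ≤ β / α
        then (e₁ : ℝ) + e₂ - α * e₁ - a * e₁
        else (e₁ : ℝ) + e₂ - β * e₂ - a * e₁))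
    (n : ℕ) (hn : 2 ≤ n) :
    (ε - 1 / n) / (n - 1) ≤ 1 + α / β - α - a := by
  have hβ0 : (0:ℝ) < β := lt_of_lt_of_le one_pos hβ1
  set E : ℝ := 1 + α / β - α - a with hE
  clear_value E
  -- Fact A: for all k > 0, ε - 1 ≤ k * E
  have factA : ∀ k : ℕ, 0 < k → ε - 1 ≤ (k : ℝ) * E := by
    intro k hk
    have hk0 : (0:ℝ) < (k:ℝ) := by exact_mod_cast hk
    set m : ℕ := ⌈(k:ℝ) * α / β⌉₊ with hm
    have hx0 : 0 < (k:ℝ) * α / β := by positivity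
    have hxm : (k:ℝ) * α / β ≤ m := Nat.le_ceil _
    have hml : (m:ℝ) < (k:ℝ) * α / β + 1 := Nat.ceil_lt_add_one hx0.le
    have hm0 : 0 < m := Nat.ceil_pos.mpr hx0
    have hm0' : (0:ℝ) < (m:ℝ) := by exact_mod_cast hm0
    have hcond : (k:ℝ) / m ≤ β / α := by
      rw [div_le_div_iff₀ hm0' hα]
      have := (div_le_iff₀ hβ0).mp hxm
      linarith
    have hh := hf k m hk
    rw [if_pos ⟨hm0, hcond⟩] at hh
    have hkE : (k:ℝ) * E = (k:ℝ) + (k:ℝ) * α / β - α * k - a * k := by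
      rw [hE]; ring
    rw [hkE]
    linarith
  have hE0 : 0 ≤ E := by
    by_contra h
    push_neg at h
    obtain ⟨k, hk⟩ := exists_nat_gt ((1 - ε) / (-E))
    have hq : 0 ≤ (1 - ε) / (-E) := by
      apply div_nonneg <;> linarith
    have hk0 : 0 < k := by
      rcases Nat.eq_zero_or_pos k with h0 | h0
      · exfalso; rw [h0] at hk; simp at hk; linarith
      · exact h0
    have hfa := factA k hk0
    rw [div_lt_iff₀ (by linarith : (0:ℝ) < -E)] at hk
    linarith
  -- Dirichlet approximation
  have hn1 : 0 < n - 1 := by omega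
  obtain ⟨j, k, hk0, hkn, hjk⟩ := Real.exists_int_int_abs_mul_sub_le (α/β) hn1
  have hcast : ((n - 1 : ℕ) : ℝ) = (n:ℝ) - 1 := by
    rw [Nat.cast_sub (by omega : 1 ≤ n)]; norm_num
  have hncast : ((n - 1 : ℕ) : ℝ) + 1 = (n:ℝ) := by rw [hcast]; ring
  rw [hncast] at hjk
  have hnR : (2:ℝ) ≤ (n:ℝ) := by exact_mod_cast hn
  have hnpos : (0:ℝ) < (n:ℝ) := by linarith
  -- convert to naturals
  set K : ℕ := k.toNat with hK
  have hKk : (K:ℤ) = k := Int.toNat_of_nonneg hk0.le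
  have hKR : (K:ℝ) = (k:ℝ) := by exact_mod_cast congrArg (Int.cast : ℤ → ℝ) hKk
  have hK0 : 0 < K := by omega
  have hK0R : (0:ℝ) < (K:ℝ) := by exact_mod_cast hK0
  have hKn : (K:ℝ) ≤ (n:ℝ) - 1 := by
    rw [hKR, ← hcast]
    exact_mod_cast hkn
  have habs : |(K:ℝ) * (α/β) - (j:ℝ)| ≤ 1 / n := by rw [hKR]; exact hjk
  have hx0 : 0 < (K:ℝ) * (α/β) := by positivity
  have h1n : 1 / (n:ℝ) ≤ 1/2 := by
    apply div_le_div_of_nonneg_left (by norm_num) (by norm_num) hnR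
  have hj0 : 0 ≤ j := by
    by_contra hj
    push_neg at hj
    have : (j:ℝ) ≤ -1 := by
      have hj1 : j ≤ -1 := by omega
      exact_mod_cast hj1
    have h1 := abs_le.mp habs
    linarith
  set J : ℕ := j.toNat with hJ
  have hJR : (J:ℝ) = (j:ℝ) := by
    have : (J:ℤ) = j := Int.toNat_of_nonneg hj0
    exact_mod_cast congrArg (Int.cast : ℤ → ℝ) this
  have habs' : |(K:ℝ) * (α/β) - (J:ℝ)| ≤ 1 / n := by rw [hJR]; exact habs
  have hab := abs_le.mp habs'
  -- key estimate : ε - 1/n ≤ K * E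
  have hkey : ε - 1/n ≤ (K:ℝ) * E := by
    rcases le_or_gt ((K:ℝ) * (α/β)) (J:ℝ) with hc | hc
    · -- branch 1
      have hJ0 : 0 < J := by
        by_contra hJ0
        push_neg at hJ0
        interval_cases J
        · simp at hc; nlinarith
      have hJ0R : (0:ℝ) < (J:ℝ) := by exact_mod_cast hJ0
      have hc2 : (K:ℝ) * α / β ≤ (J:ℝ) := by rw [mul_div_assoc]; exact hc
      have hc3 : (K:ℝ) * α ≤ (J:ℝ) * β := (div_le_iff₀ hβ0).mp hc2
      have hcond : (K:ℝ) / J ≤ β / α := by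
        rw [div_le_div_iff₀ hJ0R hα]
        linarith
      have hh := hf K J hK0
      rw [if_pos ⟨hJ0, hcond⟩] at hh
      have hkE : (K:ℝ) * E = (K:ℝ) + (K:ℝ) * (α / β) - α * K - a * K := by
        rw [hE]; ring
      rw [hkE]
      linarith [hab.2]
    · -- branch 2
      have hcond : ¬ (0 < J ∧ (K:ℝ) / J ≤ β / α) := by
        rintro ⟨hJ0, hle⟩
        have hJ0R : (0:ℝ) < (J:ℝ) := by exact_mod_cast hJ0
        rw [div_le_div_iff₀ hJ0R hα] at hle
        -- hle : K * α ≤ β * J, but J < K * (α/β)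
        have : (J:ℝ) * β < (K:ℝ) * α := by
          have := (lt_div_iff₀ hβ0).mp (by rw [mul_div_assoc]; exact hc)
          linarith
        linarith
      have hh := hf K J hK0
      rw [if_neg hcond] at hh
      have hkE : (K:ℝ) * E = (K:ℝ) + (K:ℝ) * (α / β) - α * K - a * K := by
        rw [hE]; ring
      -- ε ≤ K + J - β J - a K ; J ≥ K α/β - 1/n ; 1-β ≤ 0 ; β ≤ 2
      have hJlb : (K:ℝ) * (α/β) - 1/n ≤ (J:ℝ) := by linarith [hab.2]
      have h1 : (J:ℝ) * (1 - β) ≤ ((K:ℝ) * (α/β) - 1/n) * (1 - β) := by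
        apply mul_le_mul_of_nonpos_right hJlb (by linarith)
      have hid : (K:ℝ) * (α/β) * β = (K:ℝ) * α := by field_simp
      have hb : (β - 1) * (1/(n:ℝ)) ≤ 1 * (1/(n:ℝ)) := by
        apply mul_le_mul_of_nonneg_right (by linarith) (by positivity)
      rw [hkE]
      linarith [hh, h1, hid, hb]
  -- conclude
  rcases le_or_gt (ε - 1/n) 0 with hc | hc
  · have : (ε - 1/n) / ((n:ℝ) - 1) ≤ 0 :=
      div_nonpos_of_nonpos_of_nonneg hc (by linarith)
    linarith
  · rw [div_le_iff₀ (by linarith : (0:ℝ) < (n:ℝ) - 1)]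
    have : (K:ℝ) * E ≤ ((n:ℝ) - 1) * E := mul_le_mul_of_nonneg_right hKn hE0
    linarith
end

section
/- Let Γ ⊆ ℝ²_{≥0} be a Newton-type region (convex hull of finitely many points plus ℝ²_{≥0}) not containing (1,1). Then there exists a vector e = (e₁, e₂) with e₁, e₂ coprime positive integers such that e₁ + e₂ < inf{⟨e, p⟩ : p ∈ Γ}. -/
/-!
A Newton region `Γ` is closed, convex and stable under adding the quadrant `ℝ²≥0`, so Hahn–Banach
gives a line `a x + b y = c` strictly separating `(1,1)` from `Γ`, and stability under the quadrant
forces `a, b ≥ 0`. Since `Γ` lies in the quadrant, raising the weights only raises `a x + b y` on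
`Γ`; hence the integer weights `⌊N a⌋ + 1, ⌊N b⌋ + 1` still separate once `N (c - a - b) > 2`,
and dividing them by their gcd makes them coprime.
-/

open Pointwise
/-- A Newton-type region: convex hull of finitely many points of `ℝ²≥0` plus the
positive quadrant. -/
def IsNewtonRegion (A : Set (ℝ × ℝ)) : Prop :=
  ∃ s : Finset (ℝ × ℝ), s.Nonempty ∧ (∀ p ∈ s, 0 ≤ p.1 ∧ 0 ≤ p.2) ∧
    A = convexHull ℝ (s : Set (ℝ × ℝ)) + {p : ℝ × ℝ | 0 ≤ p.1 ∧ 0 ≤ p.2}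

theorem nonneg_of_forall_lt_add_mul {x y c : ℝ} (h : ∀ t : ℝ, 0 ≤ t → c < x + t * y) :
    0 ≤ y := by
  by_contra! hy
  have hx : c < x := by simpa using h 0 le_rfl
  have hc := h ((x - c) / -y) (div_nonneg (by linarith) (by linarith))
  rw [div_mul_eq_mul_div, div_neg, mul_div_cancel_right₀ _ hy.ne] at hc
  linarith

theorem apply_eq_mul_fst_add_mul_snd {F : Type*} [FunLike F (ℝ × ℝ) ℝ]
    [LinearMapClass F ℝ (ℝ × ℝ) ℝ] (f : F) (p : ℝ × ℝ) :
    f p = f (1, 0) * p.1 + f (0, 1) * p.2 := by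
  calc f p = f (p.1 • (1, 0) + p.2 • (0, 1)) := by congr 1; ext <;> simp
    _ = f (1, 0) * p.1 + f (0, 1) * p.2 := by
      rw [map_add, map_smul, map_smul, smul_eq_mul, smul_eq_mul, mul_comm, mul_comm p.2]

namespace IsNewtonRegion

variable {Γ : Set (ℝ × ℝ)}

theorem exists_eq_convexHull_add_Ici (hΓ : IsNewtonRegion Γ) :
    ∃ s : Finset (ℝ × ℝ), s.Nonempty ∧ (∀ p ∈ s, 0 ≤ p) ∧
      Γ = convexHull ℝ (s : Set (ℝ × ℝ)) + Set.Ici 0 := by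
  obtain ⟨s, hs, hs0, rfl⟩ := hΓ
  exact ⟨s, hs, fun p hp => Prod.le_def.2 (hs0 p hp), rfl⟩

theorem convex (hΓ : IsNewtonRegion Γ) : Convex ℝ Γ := by
  obtain ⟨s, -, -, rfl⟩ := hΓ.exists_eq_convexHull_add_Ici
  exact (convex_convexHull ℝ _).add (convex_Ici 0)

theorem isClosed (hΓ : IsNewtonRegion Γ) : IsClosed Γ := by
  obtain ⟨s, -, -, rfl⟩ := hΓ.exists_eq_convexHull_add_Ici
  exact isClosed_Ici.add_left_of_isCompact (s.finite_toSet.isCompact_convexHull ℝ)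

theorem nonempty (hΓ : IsNewtonRegion Γ) : Γ.Nonempty := by
  obtain ⟨s, ⟨p, hp⟩, -, rfl⟩ := hΓ.exists_eq_convexHull_add_Ici
  exact ⟨p + 0, Set.add_mem_add (subset_convexHull ℝ _ hp) Set.self_mem_Ici⟩

theorem nonneg (hΓ : IsNewtonRegion Γ) {p : ℝ × ℝ} (hp : p ∈ Γ) : 0 ≤ p := by
  obtain ⟨s, -, hs0, rfl⟩ := hΓ.exists_eq_convexHull_add_Ici
  obtain ⟨u, hu, v, hv, rfl⟩ := hp
  exact add_nonneg (convexHull_min hs0 (convex_Ici 0) hu) hv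

theorem add_mem (hΓ : IsNewtonRegion Γ) {p v : ℝ × ℝ} (hp : p ∈ Γ) (hv : 0 ≤ v) :
    p + v ∈ Γ := by
  obtain ⟨s, -, -, rfl⟩ := hΓ.exists_eq_convexHull_add_Ici
  obtain ⟨u, hu, w, hw, rfl⟩ := hp
  exact ⟨u, hu, w + v, add_nonneg hw hv, (add_assoc u w v).symm⟩

end IsNewtonRegion

def IsSeparatingWeight (Γ : Set (ℝ × ℝ)) (w : ℝ × ℝ) : Prop :=
  ∃ c, w.1 + w.2 < c ∧ ∀ p ∈ Γ, c < w.1 * p.1 + w.2 * p.2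

theorem IsNewtonRegion.exists_isSeparatingWeight {Γ : Set (ℝ × ℝ)} (hΓ : IsNewtonRegion Γ)
    (h1 : ((1 : ℝ), (1 : ℝ)) ∉ Γ) : ∃ w, 0 ≤ w ∧ IsSeparatingWeight Γ w := by
  obtain ⟨f, c, hf1, hfΓ⟩ := geometric_hahn_banach_point_closed hΓ.convex hΓ.isClosed h1
  obtain ⟨p₀, hp₀⟩ := hΓ.nonempty
  have hray : ∀ v : ℝ × ℝ, 0 ≤ v → ∀ t : ℝ, 0 ≤ t → c < f p₀ + t * f v := fun v hv t ht => by
    simpa only [map_add, map_smul, smul_eq_mul] using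
      hfΓ _ (hΓ.add_mem hp₀ (smul_nonneg ht hv))
  refine ⟨(f (1, 0), f (0, 1)), Prod.le_def.2 ⟨?_, ?_⟩, c, ?_, fun p hp => ?_⟩
  · exact nonneg_of_forall_lt_add_mul (hray (1, 0) (Prod.le_def.2 ⟨zero_le_one, le_rfl⟩))
  · exact nonneg_of_forall_lt_add_mul (hray (0, 1) (Prod.le_def.2 ⟨le_rfl, zero_le_one⟩))
  · rw [apply_eq_mul_fst_add_mul_snd f] at hf1
    simpa using hf1
  · have hp := hfΓ p hp
    rwa [apply_eq_mul_fst_add_mul_snd f p] at hp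

namespace IsSeparatingWeight

variable {Γ : Set (ℝ × ℝ)} {w : ℝ × ℝ}

theorem exists_nat (hΓ : ∀ p ∈ Γ, 0 ≤ p) (hw0 : 0 ≤ w) (hw : IsSeparatingWeight Γ w) :
    ∃ n₁ n₂ : ℕ, 0 < n₁ ∧ 0 < n₂ ∧ IsSeparatingWeight Γ ((n₁ : ℝ), (n₂ : ℝ)) := by
  obtain ⟨c, hc, hΓc⟩ := hw
  obtain ⟨hw₁, hw₂⟩ := Prod.le_def.1 hw0
  obtain ⟨N, hN⟩ := exists_nat_gt (2 / (c - (w.1 + w.2)))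
  rw [div_lt_iff₀ (sub_pos.2 hc)] at hN
  have hNpos : (0 : ℝ) < N := by nlinarith
  have hfloor₁ := Nat.floor_le (mul_nonneg hNpos.le hw₁)
  have hfloor₂ := Nat.floor_le (mul_nonneg hNpos.le hw₂)
  refine ⟨⌊N * w.1⌋₊ + 1, ⌊N * w.2⌋₊ + 1, Nat.succ_pos _, Nat.succ_pos _, N * c, ?_,
    fun p hp => ?_⟩
  · push_cast
    nlinarith
  · obtain ⟨hp₁, hp₂⟩ := Prod.le_def.1 (hΓ p hp)
    calc (N : ℝ) * c < N * (w.1 * p.1 + w.2 * p.2) := mul_lt_mul_of_pos_left (hΓc p hp) hNpos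
      _ = N * w.1 * p.1 + N * w.2 * p.2 := by ring
      _ ≤ _ := by
        push_cast
        gcongr
        exacts [(Nat.lt_floor_add_one _).le, (Nat.lt_floor_add_one _).le]

theorem of_smul {t : ℝ} (ht : 0 < t) (h : IsSeparatingWeight Γ (t • w)) :
    IsSeparatingWeight Γ w := by
  obtain ⟨c, hc, hΓc⟩ := h
  refine ⟨c / t, ?_, fun p hp => ?_⟩
  · rw [lt_div_iff₀ ht]
    simp only [Prod.smul_fst, Prod.smul_snd, smul_eq_mul] at hc
    linarith
  · rw [div_lt_iff₀ ht]
    have := hΓc p hp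
    simp only [Prod.smul_fst, Prod.smul_snd, smul_eq_mul] at this
    linarith

theorem exists_coprime {n₁ n₂ : ℕ} (hn₁ : 0 < n₁) (hn₂ : 0 < n₂)
    (h : IsSeparatingWeight Γ ((n₁ : ℝ), (n₂ : ℝ))) :
    ∃ e₁ e₂ : ℕ, 0 < e₁ ∧ 0 < e₂ ∧ e₁.Coprime e₂ ∧ IsSeparatingWeight Γ ((e₁ : ℝ), (e₂ : ℝ)) := by
  obtain ⟨g, e₁, e₂, hg, hcop, rfl, rfl⟩ := Nat.exists_coprime' (Nat.gcd_pos_of_pos_left n₂ hn₁)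
  refine ⟨e₁, e₂, Nat.pos_of_mul_pos_right hn₁, Nat.pos_of_mul_pos_right hn₂, hcop,
    of_smul (t := g) (by exact_mod_cast hg) ?_⟩
  convert h using 1
  ext <;> simp [mul_comm]

theorem lt_sInf (hne : Γ.Nonempty) (h : IsSeparatingWeight Γ w) :
    w.1 + w.2 < sInf {x : ℝ | ∃ p ∈ Γ, x = w.1 * p.1 + w.2 * p.2} := by
  obtain ⟨c, hc, hΓc⟩ := h
  obtain ⟨p₀, hp₀⟩ := hne
  refine hc.trans_le (le_csInf ⟨_, p₀, hp₀, rfl⟩ ?_)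
  rintro _ ⟨p, hp, rfl⟩
  exact (hΓc p hp).le

end IsSeparatingWeight

theorem stmt_15 (Γ : Set (ℝ × ℝ)) (hΓ : IsNewtonRegion Γ)
    (h1 : ((1 : ℝ), (1 : ℝ)) ∉ Γ) :
    ∃ e₁ e₂ : ℕ, 0 < e₁ ∧ 0 < e₂ ∧ Nat.Coprime e₁ e₂ ∧
      (e₁ : ℝ) + e₂ < sInf {x : ℝ | ∃ p ∈ Γ, x = (e₁ : ℝ) * p.1 + (e₂ : ℝ) * p.2} := by
  obtain ⟨w, hw0, hw⟩ := hΓ.exists_isSeparatingWeight h1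
  obtain ⟨n₁, n₂, hn₁, hn₂, hn⟩ := hw.exists_nat (fun _ => hΓ.nonneg) hw0
  obtain ⟨e₁, e₂, he₁, he₂, hcop, he⟩ := hn.exists_coprime hn₁ hn₂
  exact ⟨e₁, e₂, he₁, he₂, hcop, he.lt_sInf hΓ.nonempty⟩
end
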